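/- For every λ ∈ [0,1], the operator T_λ conserves the L¹ norm on the unit sphere: if y is a nonnegative integrable function on [0,∞) with ∫₀^∞ y(x) dx = 1, then ∫₀^∞ (T_λ y)(x) dx = 1. -/
import Mathlib


open MeasureTheory Set Real

/-- The gas-like market operator `T`:
`(Ty)(x) = ∬_{S(x)} y(u) y(v) / (u+v) du dv` with
`S(x) = {(u,v) : u > 0, v > 0, u + v > x}`. -/
noncomputable def Tgas (y : ℝ → ℝ) (x : ℝ) : ℝ :=
  ∫ p in {p : ℝ × ℝ | 0 < p.1 ∧ 0 < p.2 ∧ x < p.1 + p.2},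
    y p.1 * y p.2 / (p.1 + p.2)

/-- The gas-like operator with effectiveness parameter `λ`:
`(T_λ y)(x) = (1 - λ) y(x) + λ (Ty)(x)`. -/
noncomputable def Tlam (l : ℝ) (y : ℝ → ℝ) : ℝ → ℝ :=
  fun x => (1 - l) * y x + l * Tgas y x

lemma Sx_meas (x : ℝ) : MeasurableSet {p : ℝ × ℝ | 0 < p.1 ∧ 0 < p.2 ∧ x < p.1 + p.2} := by
  apply MeasurableSet.inter (measurableSet_lt measurable_const measurable_fst)
  apply MeasurableSet.inter (measurableSet_lt measurable_const measurable_snd)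
  exact measurableSet_lt measurable_const (measurable_fst.add measurable_snd)

lemma core (z : ℝ → ℝ) (hz : Measurable z) (hz0 : ∀ x, 0 ≤ z x)
    (hnorm : (∫⁻ x in Ioi (0:ℝ), ENNReal.ofReal (z x)) = 1) :
    (∫⁻ x in Ioi (0:ℝ), ∫⁻ p in {p : ℝ × ℝ | 0 < p.1 ∧ 0 < p.2 ∧ x < p.1 + p.2},
      ENNReal.ofReal (z p.1 * z p.2 / (p.1 + p.2))) = 1 := by
  set G : ℝ × ℝ → ENNReal := fun p => ENNReal.ofReal (z p.1 * z p.2 / (p.1 + p.2)) with hG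
  have hGmeas : Measurable G := by
    apply ENNReal.measurable_ofReal.comp
    exact ((hz.comp measurable_fst).mul (hz.comp measurable_snd)).div
      (measurable_fst.add measurable_snd)
  set F : ℝ → ℝ × ℝ → ENNReal := fun x p =>
    ({p : ℝ × ℝ | 0 < p.1 ∧ 0 < p.2 ∧ x < p.1 + p.2}).indicator G p with hF
  have h1 : ∀ x, (∫⁻ p in {p : ℝ × ℝ | 0 < p.1 ∧ 0 < p.2 ∧ x < p.1 + p.2}, G p)
      = ∫⁻ p, F x p := fun x => (lintegral_indicator (Sx_meas x) G).symm
  calc (∫⁻ x in Ioi (0:ℝ), ∫⁻ p in {p : ℝ × ℝ | 0 < p.1 ∧ 0 < p.2 ∧ x < p.1 + p.2}, G p)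
      = ∫⁻ x in Ioi (0:ℝ), ∫⁻ p, F x p := by simp_rw [h1]
    _ = ∫⁻ p, ∫⁻ x in Ioi (0:ℝ), F x p := by
        apply lintegral_lintegral_swap
        apply Measurable.aemeasurable
        have : Function.uncurry F = ({q : ℝ × (ℝ × ℝ) |
            0 < q.2.1 ∧ 0 < q.2.2 ∧ q.1 < q.2.1 + q.2.2}).indicator (fun q => G q.2) := by
          funext q
          simp [Function.uncurry, F, Set.indicator]
        rw [this]
        apply (hGmeas.comp measurable_snd).indicator
        apply MeasurableSet.inter (measurableSet_lt measurable_const (measurable_fst.comp measurable_snd))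
        apply MeasurableSet.inter (measurableSet_lt measurable_const (measurable_snd.comp measurable_snd))
        exact measurableSet_lt measurable_fst
          ((measurable_fst.comp measurable_snd).add (measurable_snd.comp measurable_snd))
    _ = ∫⁻ p, (Ioi (0:ℝ) ×ˢ Ioi (0:ℝ)).indicator
          (fun p => ENNReal.ofReal (z p.1) * ENNReal.ofReal (z p.2)) p := by
        apply lintegral_congr
        intro p
        by_cases hp : 0 < p.1 ∧ 0 < p.2
        · have hsum : 0 < p.1 + p.2 := by linarith [hp.1, hp.2]
          have : ∀ x, F x p = (Iio (p.1 + p.2)).indicator (fun _ => G p) x := by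
            intro x
            simp only [F, Set.indicator, mem_setOf_eq, mem_Iio, hp.1, hp.2, true_and]
          simp_rw [this]
          rw [lintegral_indicator measurableSet_Iio, setLIntegral_const,
            Measure.restrict_apply measurableSet_Iio]
          have : Iio (p.1 + p.2) ∩ Ioi 0 = Ioo 0 (p.1 + p.2) := by
            ext t; simp [mem_Ioo, and_comm]
          rw [this, Real.volume_Ioo, sub_zero]
          have : G p * ENNReal.ofReal (p.1 + p.2) = ENNReal.ofReal (z p.1 * z p.2) := by
            rw [hG]
            rw [← ENNReal.ofReal_mul (div_nonneg (mul_nonneg (hz0 _) (hz0 _)) hsum.le)]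
            congr 1
            field_simp
          rw [this, Set.indicator_of_mem (by exact ⟨hp.1, hp.2⟩),
            ENNReal.ofReal_mul (hz0 _)]
        · have : ∀ x, F x p = 0 := by
            intro x
            simp only [F, Set.indicator, mem_setOf_eq]
            rw [if_neg]; tauto
          simp_rw [this]
          rw [lintegral_zero, Set.indicator_of_notMem]
          simpa using hp
    _ = ∫⁻ p in Ioi (0:ℝ) ×ˢ Ioi (0:ℝ), ENNReal.ofReal (z p.1) * ENNReal.ofReal (z p.2) := by
        rw [lintegral_indicator (measurableSet_Ioi.prod measurableSet_Ioi)]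
    _ = 1 := by
        rw [Measure.volume_eq_prod, ← Measure.prod_restrict,
          lintegral_prod_mul (hz.ennreal_ofReal.aemeasurable) (hz.ennreal_ofReal.aemeasurable),
          hnorm, one_mul]

lemma phi_measurable (z : ℝ → ℝ) (hz : Measurable z) :
    Measurable (fun x : ℝ => ∫⁻ p in {p : ℝ × ℝ | 0 < p.1 ∧ 0 < p.2 ∧ x < p.1 + p.2},
      ENNReal.ofReal (z p.1 * z p.2 / (p.1 + p.2))) := by
  set G : ℝ × ℝ → ENNReal := fun p => ENNReal.ofReal (z p.1 * z p.2 / (p.1 + p.2)) with hG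
  have hGmeas : Measurable G := by
    apply ENNReal.measurable_ofReal.comp
    exact ((hz.comp measurable_fst).mul (hz.comp measurable_snd)).div
      (measurable_fst.add measurable_snd)
  have h1 : ∀ x, (∫⁻ p in {p : ℝ × ℝ | 0 < p.1 ∧ 0 < p.2 ∧ x < p.1 + p.2}, G p)
      = ∫⁻ p, ({p : ℝ × ℝ | 0 < p.1 ∧ 0 < p.2 ∧ x < p.1 + p.2}).indicator G p :=
    fun x => (lintegral_indicator (Sx_meas x) G).symm
  simp_rw [h1]
  apply Measurable.lintegral_prod_right (f := fun x p =>
    ({p : ℝ × ℝ | 0 < p.1 ∧ 0 < p.2 ∧ x < p.1 + p.2}).indicator G p)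
  have : (Function.uncurry fun x p =>
      ({p : ℝ × ℝ | 0 < p.1 ∧ 0 < p.2 ∧ x < p.1 + p.2}).indicator G p) = ({q : ℝ × (ℝ × ℝ) |
      0 < q.2.1 ∧ 0 < q.2.2 ∧ q.1 < q.2.1 + q.2.2}).indicator (fun q => G q.2) := by
    funext q
    simp [Function.uncurry, Set.indicator]
  rw [this]
  apply (hGmeas.comp measurable_snd).indicator
  apply MeasurableSet.inter (measurableSet_lt measurable_const (measurable_fst.comp measurable_snd))
  apply MeasurableSet.inter (measurableSet_lt measurable_const (measurable_snd.comp measurable_snd))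
  exact measurableSet_lt measurable_fst
    ((measurable_fst.comp measurable_snd).add (measurable_snd.comp measurable_snd))


noncomputable def TgasL (z : ℝ → ℝ) (x : ℝ) : ENNReal :=
  ∫⁻ p in {p : ℝ × ℝ | 0 < p.1 ∧ 0 < p.2 ∧ x < p.1 + p.2},
    ENNReal.ofReal (z p.1 * z p.2 / (p.1 + p.2))

lemma Tgas_eq_toReal (z : ℝ → ℝ) (hz : Measurable z) (hz0 : ∀ x, 0 ≤ z x) (x : ℝ) :
    Tgas z x = (TgasL z x).toReal := by
  rw [Tgas, TgasL]
  apply integral_eq_lintegral_of_nonneg_ae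
  · rw [Filter.EventuallyLE, ae_restrict_iff' (Sx_meas x)]
    filter_upwards with p hp
    exact div_nonneg (mul_nonneg (hz0 _) (hz0 _)) (by linarith [hp.1, hp.2.1])
  · exact (((hz.comp measurable_fst).mul (hz.comp measurable_snd)).div
      (measurable_fst.add measurable_snd)).aestronglyMeasurable


/-- for every `λ ∈ [0,1]`, `T_λ` preserves the unit sphere of `L¹`. -/
theorem norm_Tlam_eq_one (l : ℝ) (hl : l ∈ Icc (0:ℝ) 1)
    (y : ℝ → ℝ) (hy_nonneg : ∀ x, 0 ≤ y x)
    (hy_int : IntegrableOn y (Ioi 0))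
    (hy_norm : (∫ x in Ioi (0:ℝ), y x) = 1) :
    (∫ x in Ioi (0:ℝ), Tlam l y x) = 1 := by
  -- measurable nonneg representative
  obtain ⟨y', hy'm, hy'ae⟩ := hy_int.1
  set z : ℝ → ℝ := fun u => if 0 < u then max (y' u) 0 else 0 with hzdef
  have hzm : Measurable z := by
    apply Measurable.ite (measurableSet_lt measurable_const measurable_id)
    · exact hy'm.measurable.max measurable_const
    · exact measurable_const
  have hz0 : ∀ u, 0 ≤ z u := by
    intro u; rw [hzdef]; dsimp only
    split <;> simp [le_max_right]
  -- y = z a.e. on Ioi 0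
  have hy'full : ∀ᵐ u, u ∈ Ioi (0:ℝ) → y u = y' u :=
    (ae_restrict_iff' measurableSet_Ioi).1 hy'ae
  have haeIoi : ∀ᵐ u, u ∈ Ioi (0:ℝ) → y u = z u := by
    filter_upwards [hy'full] with u hu hu0
    rw [hzdef]; dsimp only
    have h0 : (0:ℝ) < u := hu0
    rw [if_pos h0, ← hu hu0, max_eq_left (hy_nonneg u)]
  have haez : y =ᵐ[volume.restrict (Ioi 0)] z :=
    (ae_restrict_iff' measurableSet_Ioi).2 haeIoi
  -- lintegral norm of z
  have hznorm : (∫⁻ x in Ioi (0:ℝ), ENNReal.ofReal (z x)) = 1 := by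
    have h1 : (∫⁻ x in Ioi (0:ℝ), ENNReal.ofReal (z x))
        = ∫⁻ x in Ioi (0:ℝ), ENNReal.ofReal (y x) :=
      lintegral_congr_ae (haez.mono fun u hu => by simp only []; rw [← hu])
    rw [h1, ← ofReal_integral_eq_lintegral_ofReal hy_int
      (Filter.Eventually.of_forall fun u => hy_nonneg u), hy_norm, ENNReal.ofReal_one]
  -- Tgas y = Tgas z everywhere
  have hN : volume {u : ℝ | ¬ (u ∈ Ioi (0:ℝ) → y u = z u)} = 0 := haeIoi
  have hTgas_eq : ∀ x, Tgas y x = Tgas z x := by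
    intro x
    apply setIntegral_congr_ae (Sx_meas x)
    have hbad : (volume : Measure (ℝ × ℝ))
        {p : ℝ × ℝ | ¬ ((0 < p.1 → y p.1 = z p.1) ∧ (0 < p.2 → y p.2 = z p.2))} = 0 := by
      rw [Measure.volume_eq_prod]
      have hsub : {p : ℝ × ℝ | ¬ ((0 < p.1 → y p.1 = z p.1) ∧ (0 < p.2 → y p.2 = z p.2))} ⊆
          ({u : ℝ | ¬ (u ∈ Ioi (0:ℝ) → y u = z u)} ×ˢ univ) ∪
          (univ ×ˢ {u : ℝ | ¬ (u ∈ Ioi (0:ℝ) → y u = z u)}) := by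
        intro p hp
        simp only [mem_setOf_eq, not_and_or] at hp
        rcases hp with hp | hp
        · left; exact ⟨by simpa using hp, mem_univ _⟩
        · right; exact ⟨mem_univ _, by simpa using hp⟩
      exact measure_mono_null hsub (measure_union_null
        (by rw [Measure.prod_prod, hN, zero_mul]) (by rw [Measure.prod_prod, hN, mul_zero]))
    have : ∀ᵐ p : ℝ × ℝ, (0 < p.1 → y p.1 = z p.1) ∧ (0 < p.2 → y p.2 = z p.2) := hbad
    filter_upwards [this] with p hp hpS
    rw [hp.1 hpS.1, hp.2 hpS.2.1]
  -- core computation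
  have hcore := core z hzm hz0 hznorm
  have hTgasL : (∫⁻ x in Ioi (0:ℝ), TgasL z x) = 1 := hcore
  have hphi : Measurable (TgasL z) := phi_measurable z hzm
  have hfin : ∀ᵐ x ∂(volume.restrict (Ioi 0)), TgasL z x < ⊤ :=
    ae_lt_top hphi (by rw [hTgasL]; exact ENNReal.one_ne_top)
  have hint_Tgas : IntegrableOn (Tgas z) (Ioi 0) := by
    have : IntegrableOn (fun x => (TgasL z x).toReal) (Ioi 0) :=
      integrable_toReal_of_lintegral_ne_top hphi.aemeasurable (by rw [hTgasL]; exact ENNReal.one_ne_top)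
    exact this.congr_fun (fun x _ => (Tgas_eq_toReal z hzm hz0 x).symm) measurableSet_Ioi
  have hTgas_int_val : (∫ x in Ioi (0:ℝ), Tgas z x) = 1 := by
    calc (∫ x in Ioi (0:ℝ), Tgas z x) = ∫ x in Ioi (0:ℝ), (TgasL z x).toReal := by
          exact setIntegral_congr_fun measurableSet_Ioi fun x _ => Tgas_eq_toReal z hzm hz0 x
      _ = (∫⁻ x in Ioi (0:ℝ), TgasL z x).toReal := integral_toReal hphi.aemeasurable hfin
      _ = 1 := by rw [hTgasL]; rfl
  have hTy : ∀ x, Tgas y x = Tgas z x := hTgas_eq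
  have hint_Tgasy : IntegrableOn (Tgas y) (Ioi 0) := hint_Tgas.congr_fun (fun x _ => (hTy x).symm) measurableSet_Ioi
  have hTgasy_val : (∫ x in Ioi (0:ℝ), Tgas y x) = 1 := by
    rw [setIntegral_congr_fun measurableSet_Ioi fun x _ => hTy x]; exact hTgas_int_val
  -- assemble
  have : (∫ x in Ioi (0:ℝ), Tlam l y x)
      = (1 - l) * (∫ x in Ioi (0:ℝ), y x) + l * ∫ x in Ioi (0:ℝ), Tgas y x := by
    simp only [Tlam]
    rw [integral_add (hy_int.const_mul _) (hint_Tgasy.const_mul _),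
      integral_const_mul, integral_const_mul]
  rw [this, hy_norm, hTgasy_val]; ring
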